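/- With the setup of the selection protocol, the success probability after k rounds satisfies ρ = Σ_{w : l(w) = k} δ_w f'(y_w), and moreover this equals Σ_{i=1}^{m} (z_i - z_{i-1}) f'(z_{i-1}) where m = 2^k and z_0 < z_1 < ... < z_m are the cumulative values y_w (with z_0 = 0, z_m = 1) in increasing order of the binary value of w. -/

import Mathlib

/-- `delta p ℓ j` is δ_w for the binary word `w` of length `ℓ` with binary value `j`. -/
noncomputable def delta (p : ℕ → ℕ → ℝ) : ℕ → ℕ → ℝ
  | 0, _ => 1
  | ℓ + 1, j => (if j % 2 = 1 then p ℓ (j / 2) else 1 - p ℓ (j / 2)) * delta p ℓ (j / 2)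

/-- `yw p ℓ j = Σ_{v < w, l(v) = ℓ} δ_v`, words ordered by binary value. -/
noncomputable def yw (p : ℕ → ℕ → ℝ) (ℓ j : ℕ) : ℝ :=
  ∑ v ∈ Finset.range j, delta p ℓ v

/-- `F f p ℓ j` is the generating function f_w for the word `w` of length `ℓ` with
binary value `j`: f_∅ = f, f_{w1}(x) = f_w(p_w x + 1 - p_w) - f_w(1 - p_w),
f_{w0}(x) = f_w((1 - p_w) x). -/
noncomputable def F (f : ℝ → ℝ) (p : ℕ → ℕ → ℝ) : ℕ → ℕ → (ℝ → ℝ)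
  | 0, _ => f
  | ℓ + 1, j =>
    if j % 2 = 1 then
      fun x => F f p ℓ (j / 2) (p ℓ (j / 2) * x + 1 - p ℓ (j / 2))
        - F f p ℓ (j / 2) (1 - p ℓ (j / 2))
    else
      fun x => F f p ℓ (j / 2) ((1 - p ℓ (j / 2)) * x)

/-!
Unwinding the recursion, every `f_w` is an affine reparametrisation of `f` up to an additive
constant: `f_w(x) = f(δ_w x + y_w) + c_w`. Indeed the map `x ↦ (1 - p_w) x` sends the interval
`[y_w, y_w + δ_w]` onto the part belonging to `w0`, and `x ↦ p_w x + 1 - p_w` onto the part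
belonging to `w1`, which starts at `y_w + (1 - p_w) δ_w = y_{w1}`. The chain rule then gives
`f_w'(0) = δ_w f'(y_w)`, and `δ_w = y_{w+1} - y_w` turns the sum into a Riemann-type sum.
-/

lemma delta_two_mul (p : ℕ → ℕ → ℝ) (ℓ m : ℕ) :
    delta p (ℓ + 1) (2 * m) = (1 - p ℓ m) * delta p ℓ m := by
  simp [delta]

lemma delta_two_mul_add_one (p : ℕ → ℕ → ℝ) (ℓ m : ℕ) :
    delta p (ℓ + 1) (2 * m + 1) = p ℓ m * delta p ℓ m := by
  simp [delta, Nat.add_mod, Nat.add_div]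

lemma yw_zero (p : ℕ → ℕ → ℝ) (ℓ : ℕ) : yw p ℓ 0 = 0 := by
  simp [yw]

lemma yw_succ (p : ℕ → ℕ → ℝ) (ℓ j : ℕ) : yw p ℓ (j + 1) = yw p ℓ j + delta p ℓ j :=
  Finset.sum_range_succ _ _

lemma yw_succ_two_mul (p : ℕ → ℕ → ℝ) (ℓ m : ℕ) :
    yw p (ℓ + 1) (2 * m) = yw p ℓ m := by
  induction m with
  | zero => simp [yw_zero]
  | succ m ih =>
    rw [show 2 * (m + 1) = 2 * m + 1 + 1 by ring, yw_succ, yw_succ, ih, yw_succ,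
      delta_two_mul, delta_two_mul_add_one]
    ring

lemma yw_succ_two_mul_add_one (p : ℕ → ℕ → ℝ) (ℓ m : ℕ) :
    yw p (ℓ + 1) (2 * m + 1) = yw p ℓ m + (1 - p ℓ m) * delta p ℓ m := by
  rw [yw_succ, yw_succ_two_mul, delta_two_mul]

lemma yw_two_pow (p : ℕ → ℕ → ℝ) (k : ℕ) : yw p k (2 ^ k) = 1 := by
  induction k with
  | zero => simp [yw, delta]
  | succ k ih => rw [pow_succ', yw_succ_two_mul, ih]

lemma F_succ_two_mul (f : ℝ → ℝ) (p : ℕ → ℕ → ℝ) (ℓ m : ℕ) :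
    F f p (ℓ + 1) (2 * m) = fun x => F f p ℓ m ((1 - p ℓ m) * x) := by
  simp [F]

lemma F_succ_two_mul_add_one (f : ℝ → ℝ) (p : ℕ → ℕ → ℝ) (ℓ m : ℕ) :
    F f p (ℓ + 1) (2 * m + 1) =
      fun x => F f p ℓ m (p ℓ m * x + 1 - p ℓ m) - F f p ℓ m (1 - p ℓ m) := by
  simp [F, Nat.add_mod, Nat.add_div]

lemma exists_F_eq_comp_affine (f : ℝ → ℝ) (p : ℕ → ℕ → ℝ) {ℓ j : ℕ} (hj : j < 2 ^ ℓ) :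
    ∃ c, F f p ℓ j = fun x => f (delta p ℓ j * x + yw p ℓ j) + c := by
  induction ℓ generalizing j with
  | zero =>
    obtain rfl : j = 0 := by simpa using hj
    exact ⟨0, by ext x; simp [F, delta, yw]⟩
  | succ ℓ ih =>
    obtain ⟨m, rfl | rfl⟩ := Nat.even_or_odd' j
    · obtain ⟨c, hc⟩ := ih (show m < 2 ^ ℓ by rw [pow_succ] at hj; omega)
      refine ⟨c, funext fun x => ?_⟩
      rw [F_succ_two_mul, hc, delta_two_mul, yw_succ_two_mul]
      ring_nf
    · obtain ⟨c, hc⟩ := ih (show m < 2 ^ ℓ by rw [pow_succ] at hj; omega)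
      refine ⟨-f (yw p ℓ m + (1 - p ℓ m) * delta p ℓ m), funext fun x => ?_⟩
      rw [F_succ_two_mul_add_one, hc, delta_two_mul_add_one, yw_succ_two_mul_add_one]
      have hx : delta p ℓ m * (p ℓ m * x + 1 - p ℓ m) + yw p ℓ m =
          p ℓ m * delta p ℓ m * x + (yw p ℓ m + (1 - p ℓ m) * delta p ℓ m) := by ring
      have hconst : delta p ℓ m * (1 - p ℓ m) + yw p ℓ m = yw p ℓ m + (1 - p ℓ m) * delta p ℓ m := by
        ring
      simp only [hx, hconst]
      ring

lemma deriv_F_zero (f : ℝ → ℝ) (p : ℕ → ℕ → ℝ) {ℓ j : ℕ} (hj : j < 2 ^ ℓ) :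
    deriv (F f p ℓ j) 0 = delta p ℓ j * deriv f (yw p ℓ j) := by
  obtain ⟨c, hc⟩ := exists_F_eq_comp_affine f p hj
  rw [hc, deriv_add_const]
  simpa [deriv_comp_add_const] using
    deriv_comp_mul_left (delta p ℓ j) (fun u => f (u + yw p ℓ j)) 0

theorem stmt_6_general (f : ℝ → ℝ) (p : ℕ → ℕ → ℝ)
    (k : ℕ) (ρ : ℝ) (hρ : ρ = ∑ j ∈ Finset.range (2 ^ k), deriv (F f p k j) 0) :
    ρ = ∑ j ∈ Finset.range (2 ^ k), delta p k j * deriv f (yw p k j) ∧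
    ρ = ∑ i ∈ Finset.range (2 ^ k), (yw p k (i + 1) - yw p k i) * deriv f (yw p k i) ∧
    yw p k 0 = 0 ∧ yw p k (2 ^ k) = 1 := by
  have hρ' : ρ = ∑ j ∈ Finset.range (2 ^ k), delta p k j * deriv f (yw p k j) := by
    rw [hρ]
    exact Finset.sum_congr rfl fun j hj => deriv_F_zero f p (Finset.mem_range.1 hj)
  exact ⟨hρ', by simpa only [yw_succ, add_sub_cancel_left] using hρ', yw_zero p k, yw_two_pow p k⟩

theorem stmt_6 (q : ℕ → ℝ) (hq : ∀ n, 0 ≤ q n) (hq0 : q 0 = 0)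
    (hqsum : Summable q) (hqtot : ∑' n, q n = 1)
    (hrad : ∀ r ∈ Set.Ico (0:ℝ) 1, Summable fun n => q n * r ^ n)
    (f : ℝ → ℝ) (hf : ∀ x, f x = ∑' n : ℕ, q n * x ^ n)
    (p : ℕ → ℕ → ℝ) (hp : ∀ ℓ j, p ℓ j ∈ Set.Ioo (0:ℝ) 1)
    (k : ℕ) (ρ : ℝ) (hρ : ρ = ∑ j ∈ Finset.range (2 ^ k), deriv (F f p k j) 0) :
    ρ = ∑ j ∈ Finset.range (2 ^ k), delta p k j * deriv f (yw p k j) ∧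
    ρ = ∑ i ∈ Finset.range (2 ^ k), (yw p k (i + 1) - yw p k i) * deriv f (yw p k i) ∧
    yw p k 0 = 0 ∧ yw p k (2 ^ k) = 1 :=
  stmt_6_general f p k ρ hρ
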